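/- Every induced subgraph H of G_n with clique number at most 2 (i.e., triangle-free) has chromatic number at most 4. -/
import Mathlib

/-- Vertex set of the digraph `D (n+1)` from the paper (`Vtx n` = vertices of `D_{n+1}`). -/
def Vtx : ℕ → Type
  | 0 => Unit
  | (n+1) => (Fin (n+1) × Vtx n) ⊕ ((i : Fin (n+1)) → Vtx n)

/-- Edge relation of `D_{n+1}`. -/
def DEdge : (n : ℕ) → Vtx n → Vtx n → Prop
  | 0, _, _ => False
  | (n+1), Sum.inl (i, x), Sum.inl (j, y) => i = j ∧ DEdge n x y
  | (n+1), Sum.inl (i, x), Sum.inr T => T i = x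
  | (_+1), Sum.inr _, _ => False

/-- There is a directed walk of length `k` from `u` to `v`. -/
def WalkLen {V : Type*} (E : V → V → Prop) (u v : V) (k : ℕ) : Prop :=
  ∃ f : Fin (k+1) → V, f 0 = u ∧ f (Fin.last k) = v ∧
    ∀ i : Fin k, E (f i.castSucc) (f i.succ)

/-- `l` is a directed path (as a list of distinct vertices) from `u` to `v`. -/
def IsDPath {V : Type*} (E : V → V → Prop) (u v : V) (l : List V) : Prop :=
  l.Chain' E ∧ l.Nodup ∧ l.head? = some u ∧ l.getLast? = some v

/-- Positive edges of `D'`. -/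
def PosE {V : Type*} (E : V → V → Prop) (u v : V) : Prop :=
  ∃ k, k % 3 = 1 ∧ WalkLen E u v k

/-- Negative edges of `D'`. -/
def NegE {V : Type*} (E : V → V → Prop) (u v : V) : Prop :=
  ∃ k, k % 3 = 2 ∧ WalkLen E v u k

/-- Edge relation of `D_{n+1}'`. -/
def DEdge' (n : ℕ) (u v : Vtx n) : Prop :=
  PosE (DEdge n) u v ∨ NegE (DEdge n) u v

/-- Underlying undirected graph of a digraph. -/
def underSG {V : Type*} (E : V → V → Prop) : SimpleGraph V :=
  SimpleGraph.fromRel E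

/-- `G_{n+1}`, the underlying undirected graph of `D_{n+1}'`. -/
def Gn (n : ℕ) : SimpleGraph (Vtx n) := underSG (DEdge' n)

/-- A digraph is acyclic iff no vertex lies on a directed cycle. -/
def DAcyclic {V : Type*} (E : V → V → Prop) : Prop :=
  ∀ v : V, ¬ Relation.TransGen E v v

/-- `k`-dicolorability. -/
def Dicolorable {V : Type*} (E : V → V → Prop) (k : ℕ) : Prop :=
  ∃ f : V → Fin k, ∀ c : Fin k,
    DAcyclic (fun a b => E a b ∧ f a = c ∧ f b = c)

/-- `D` has an induced directed cycle of odd length at least 5. -/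
def HasInducedOddCycle {V : Type*} (E : V → V → Prop) : Prop :=
  ∃ m : ℕ, 5 ≤ m ∧ Odd m ∧ ∃ f : ZMod m → V, Function.Injective f ∧
    (∀ i, E (f i) (f (i+1))) ∧ (∀ i j, E (f i) (f j) → j = i + 1)

/-! ### Auxiliary material -/

/-- Rank function on `Vtx n`, strictly increasing along edges. -/
def rk : (n : ℕ) → Vtx n → ℕ
  | 0, _ => 0
  | (n+1), Sum.inl p => rk n p.2
  | (n+1), Sum.inr _ => n+1

lemma rk_le : ∀ (n : ℕ) (v : Vtx n), rk n v ≤ n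
  | 0, _ => le_refl 0
  | (n+1), Sum.inl p => (rk_le n p.2).trans (Nat.le_succ n)
  | (_+1), Sum.inr _ => le_refl _

lemma dedge_rk : ∀ (n : ℕ) {u v : Vtx n}, DEdge n u v → rk n u < rk n v := by
  intro n
  induction n with
  | zero => intro u v h; exact h.elim
  | succ n ih =>
    rintro (⟨i, x⟩ | T) (⟨j, y⟩ | T') h
    · exact ih h.2
    · exact Nat.lt_succ_of_le (rk_le n x)
    · exact h.elim
    · exact h.elim

lemma walkLen_zero {V : Type*} {E : V → V → Prop} {u v : V} (h : WalkLen E u v 0) : u = v := by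
  obtain ⟨f, h0, hl, _⟩ := h
  rw [← h0, ← hl]; rfl

lemma walkLen_refl {V : Type*} {E : V → V → Prop} (u : V) : WalkLen E u u 0 :=
  ⟨fun _ => u, rfl, rfl, fun i => i.elim0⟩

lemma walkLen_succ_iff {V : Type*} {E : V → V → Prop} {u v : V} {k : ℕ} :
    WalkLen E u v (k+1) ↔ ∃ w, E u w ∧ WalkLen E w v k := by
  constructor
  · rintro ⟨f, h0, hl, hs⟩
    refine ⟨f (Fin.succ 0), ?_, fun i => f i.succ, rfl, ?_, ?_⟩
    · have := hs 0
      rwa [Fin.castSucc_zero, h0] at this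
    · show f (Fin.last k).succ = v
      rw [Fin.succ_last]; exact hl
    · intro i
      have := hs i.succ
      rwa [← Fin.succ_castSucc] at this
  · rintro ⟨w, hw, g, h0, hl, hs⟩
    refine ⟨Fin.cons u g, rfl, ?_, ?_⟩
    · rw [← Fin.succ_last, Fin.cons_succ]; exact hl
    · intro i
      induction i using Fin.cases with
      | zero =>
        rw [Fin.castSucc_zero, Fin.cons_zero, Fin.succ_zero_eq_one,
          show (1 : Fin (k+2)) = Fin.succ 0 from rfl, Fin.cons_succ, h0]
        exact hw
      | succ j =>
        rw [← Fin.succ_castSucc, Fin.cons_succ, Fin.cons_succ]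
        exact hs j

lemma walkLen_trans {V : Type*} {E : V → V → Prop} {b : ℕ} :
    ∀ {a : ℕ} {u v w : V}, WalkLen E u v a → WalkLen E v w b → WalkLen E u w (a + b) := by
  intro a
  induction a with
  | zero =>
    intro u v w h1 h2
    rw [walkLen_zero h1, Nat.zero_add]
    exact h2
  | succ a ih =>
    intro u v w h1 h2
    obtain ⟨x, hx, h1'⟩ := walkLen_succ_iff.mp h1
    have := walkLen_succ_iff.mpr ⟨x, hx, ih h1' h2⟩
    rwa [show a + b + 1 = a + 1 + b by omega] at this

lemma walk_rank {V : Type*} {E : V → V → Prop} {ρ : V → ℕ}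
    (hmono : ∀ a b, E a b → ρ a < ρ b) :
    ∀ {k : ℕ} {u v : V}, WalkLen E u v k → ρ u + k ≤ ρ v := by
  intro k
  induction k with
  | zero => intro u v hw; rw [walkLen_zero hw]; omega
  | succ k ih =>
    intro u v hw
    obtain ⟨x, hx, hw'⟩ := walkLen_succ_iff.mp hw
    have h1 := hmono _ _ hx
    have h2 := ih hw'
    omega

open Classical in
/-- First colour class: does some positive edge enter `v` from within `S`? -/
noncomputable def col1 (n : ℕ) (S : Set (Vtx n)) (v : Vtx n) : Bool :=
  decide (∃ u ∈ S, PosE (DEdge n) u v)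

open Classical in
/-- Second colour class: does some negative edge of `S` start a length-2-mod-3 walk at `v`? -/
noncomputable def col2 (n : ℕ) (S : Set (Vtx n)) (v : Vtx n) : Bool :=
  decide (∃ w ∈ S, NegE (DEdge n) w v)

lemma col1_iff {n : ℕ} {S : Set (Vtx n)} {v : Vtx n} :
    col1 n S v = true ↔ ∃ u ∈ S, PosE (DEdge n) u v := by
  simp [col1]

lemma col2_iff {n : ℕ} {S : Set (Vtx n)} {v : Vtx n} :
    col2 n S v = true ↔ ∃ w ∈ S, NegE (DEdge n) w v := by
  simp [col2]

/-- every triangle-free induced subgraph of `G_n` is 4-colorable. -/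
theorem Gn_triangle_free_chrom (n : ℕ) (S : Set (Vtx n))
    (hS : ∀ s : Finset S, ¬ ((Gn n).induce S).IsNClique 3 s) :
    ((Gn n).induce S).Colorable 4 := by
  classical
  have hrk : ∀ a b : Vtx n, DEdge n a b → rk n a < rk n b := fun a b h => dedge_rk n h
  have hne : ∀ {u v : Vtx n} {k : ℕ}, WalkLen (DEdge n) u v k → k ≠ 0 → u ≠ v := by
    intro u v k hw hk huv
    subst huv
    have := walk_rank hrk hw
    omega
  -- a triangle in the induced subgraph is impossible
  have tri : ∀ a b c : S, (Gn n).Adj a.1 b.1 → (Gn n).Adj a.1 c.1 → (Gn n).Adj b.1 c.1 → False := by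
    intro a b c hab hac hbc
    exact hS {a, b, c} (SimpleGraph.is3Clique_iff.mpr ⟨a, b, c, hab, hac, hbc, rfl⟩)
  have adj : ∀ u v : Vtx n, u ≠ v → (DEdge' n u v ∨ DEdge' n v u) → (Gn n).Adj u v :=
    fun u v h h' => (SimpleGraph.fromRel_adj _ _ _).mpr ⟨h, h'⟩
  -- key properness facts
  have key1 : ∀ u v : S, PosE (DEdge n) u.1 v.1 →
      col1 n S v.1 = true ∧ col1 n S u.1 = false := by
    rintro u v ⟨k, hk, hw⟩
    refine ⟨col1_iff.mpr ⟨u.1, u.2, k, hk, hw⟩, ?_⟩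
    by_contra hc
    obtain ⟨t, htS, k', hk', hw'⟩ := col1_iff.mp (eq_true_of_ne_false hc)
    have hwtv : WalkLen (DEdge n) t v.1 (k' + k) := walkLen_trans hw' hw
    have huv : u.1 ≠ v.1 := hne hw (by omega)
    have htu : t ≠ u.1 := hne hw' (by omega)
    have htv : t ≠ v.1 := hne hwtv (by omega)
    exact tri ⟨t, htS⟩ u v
      (adj _ _ htu (Or.inl (Or.inl ⟨k', hk', hw'⟩)))
      (adj _ _ htv (Or.inr (Or.inr ⟨k' + k, by omega, hwtv⟩)))
      (adj _ _ huv (Or.inl (Or.inl ⟨k, hk, hw⟩)))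
  have key2 : ∀ u v : S, NegE (DEdge n) v.1 u.1 →
      col2 n S u.1 = true ∧ col2 n S v.1 = false := by
    rintro u v ⟨k, hk, hw⟩
    -- hw : walk from u to v of length k ≡ 2
    refine ⟨col2_iff.mpr ⟨v.1, v.2, k, hk, hw⟩, ?_⟩
    by_contra hc
    obtain ⟨w, hwS, k', hk', hw'⟩ := col2_iff.mp (eq_true_of_ne_false hc)
    -- hw' : walk from v to w of length k' ≡ 2
    have hwuw : WalkLen (DEdge n) u.1 w (k + k') := walkLen_trans hw hw'
    have huv : u.1 ≠ v.1 := hne hw (by omega)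
    have hvw : v.1 ≠ w := hne hw' (by omega)
    have huw : u.1 ≠ w := hne hwuw (by omega)
    exact tri u v ⟨w, hwS⟩
      (adj _ _ huv (Or.inr (Or.inr ⟨k, hk, hw⟩)))
      (adj _ _ huw (Or.inl (Or.inl ⟨k + k', by omega, hwuw⟩)))
      (adj _ _ hvw (Or.inr (Or.inr ⟨k', hk', hw'⟩)))
  -- the coloring
  let f : S → Bool × Bool := fun v => (col1 n S v.1, col2 n S v.1)
  have hf : ∀ {a b : S}, ((Gn n).induce S).Adj a b → f a ≠ f b := by
    intro a b hab
    have hab' : (Gn n).Adj a.1 b.1 := hab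
    obtain ⟨-, h⟩ := (SimpleGraph.fromRel_adj _ _ _).mp hab'
    have h' : (PosE (DEdge n) a.1 b.1 ∨ NegE (DEdge n) a.1 b.1) ∨
        (PosE (DEdge n) b.1 a.1 ∨ NegE (DEdge n) b.1 a.1) := h
    intro hfe
    have h1 : col1 n S a.1 = col1 n S b.1 := congrArg Prod.fst hfe
    have h2 : col2 n S a.1 = col2 n S b.1 := congrArg Prod.snd hfe
    rcases h' with (hp | hn) | (hp | hn)
    · obtain ⟨e1, e2⟩ := key1 a b hp; rw [e1, e2] at h1; exact Bool.false_ne_true h1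
    · obtain ⟨e1, e2⟩ := key2 b a hn; rw [e1, e2] at h2; exact Bool.false_ne_true h2
    · obtain ⟨e1, e2⟩ := key1 b a hp; rw [e1, e2] at h1; exact Bool.false_ne_true h1.symm
    · obtain ⟨e1, e2⟩ := key2 a b hn; rw [e1, e2] at h2; exact Bool.false_ne_true h2.symm
  have C : ((Gn n).induce S).Coloring (Bool × Bool) := SimpleGraph.Coloring.mk f fun h => hf h
  have h4 : Fintype.card (Bool × Bool) = 4 := by simp
  exact h4 ▸ C.colorable
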